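/- Let W : ℝ^{m×p₂} → ℝⁿ be a linear map, let σ, c, c₁ > 0, let r ≥ 1, let z ∈ ℝⁿ, and let E ∈ ℝ^{m×p₂}. Suppose that ‖W(E) − z‖₂² ≤ σ²(n + c₁·r·max(m,p₂)), that ‖z‖₂² ≥ σ²(n − c₁·r·max(m,p₂)), that ‖W*(z)‖ ≤ c·σ·√(max(m,p₂)), and that ‖E‖_* ≤ 2√(2r)‖E‖_F. Then ‖W(E)‖₂² ≤ 4c·σ·√(2r)·‖E‖_F·√(max(m,p₂)) + 2c₁·σ²·r·max(m,p₂). -/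

import Mathlib

/-! Expanding `‖W E‖² = ‖W E - z‖² + 2⟨z, W E⟩ - ‖z‖²`, the two feasibility bounds leave only the
cross term, and `⟨z, W E⟩ = ⟨W* z, E⟩ ≤ ‖W* z‖ ‖E‖_*` by trace duality. Trace duality itself comes
from computing the trace inner product in an orthonormal eigenbasis `(v_k)` of `Eᵀ E`: there
`⟨A, E⟩ = ∑ₖ ⟨A v_k, E v_k⟩`, with `‖A v_k‖ ≤ ‖A‖` and `‖E v_k‖` the singular values of `E`. -/

noncomputable section
open MeasureTheory

/-- Frobenius norm of a real matrix. -/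
def frobNorm {a b : ℕ} (X : Matrix (Fin a) (Fin b) ℝ) : ℝ :=
  Real.sqrt (∑ i, ∑ j, (X i j) ^ 2)

/-- Euclidean norm of a vector. -/
def l2Norm {n : ℕ} (v : Fin n → ℝ) : ℝ :=
  Real.sqrt (∑ i, (v i) ^ 2)

/-- Sum of Euclidean norms of the rows (ℓ_{1,2} norm). -/
def l12Norm {a b : ℕ} (X : Matrix (Fin a) (Fin b) ℝ) : ℝ :=
  ∑ i, Real.sqrt (∑ j, (X i j) ^ 2)

/-- Nuclear norm: sum of the singular values of `X`. -/
def nuclearNorm {a b : ℕ} (X : Matrix (Fin a) (Fin b) ℝ) : ℝ :=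
  ∑ i, Real.sqrt ((Matrix.isHermitian_conjTranspose_mul_self X : (X.transpose * X).IsHermitian).eigenvalues i)

/-- Spectral norm (ℓ₂ operator norm). -/
def specNorm {a b : ℕ} (X : Matrix (Fin a) (Fin b) ℝ) : ℝ :=
  sSup ((fun v => l2Norm (X.mulVec v)) '' {v | l2Norm v ≤ 1})

/-- Number of nonzero rows. -/
def rowSparsity {a b : ℕ} (X : Matrix (Fin a) (Fin b) ℝ) : ℕ :=
  {i | X i ≠ 0}.ncard

/-- The set 𝕏_{k,r} of matrices with at most `k` nonzero rows and rank at most `r`. -/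
def sparseLowRank (p₁ p₂ k r : ℕ) : Set (Matrix (Fin p₁) (Fin p₂) ℝ) :=
  {X | rowSparsity X ≤ k ∧ X.rank ≤ r}

/-- Gaussian measure on ℝⁿ with mean `μ` and covariance `σ² Iₙ`. -/
def gaussianPi (n : ℕ) (μ : Fin n → ℝ) (σ : ℝ) : Measure (Fin n → ℝ) :=
  Measure.pi fun i => ProbabilityTheory.gaussianReal (μ i) (Real.toNNReal (σ ^ 2))

open Matrix

section

variable {n : ℕ}

lemma l2Norm_eq_norm_toLp (v : Fin n → ℝ) :
    l2Norm v = ‖(WithLp.toLp 2 v : EuclideanSpace ℝ (Fin n))‖ := by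
  simp [l2Norm, EuclideanSpace.norm_eq]

lemma l2Norm_sq (v : Fin n → ℝ) : l2Norm v ^ 2 = ∑ i, v i ^ 2 :=
  Real.sq_sqrt (by positivity)

lemma l2Norm_eq_sqrt_dotProduct (v : Fin n → ℝ) : l2Norm v = Real.sqrt (v ⬝ᵥ v) := by
  simp [l2Norm, dotProduct, sq]

lemma dotProduct_le_l2Norm_mul_l2Norm (u v : Fin n → ℝ) : u ⬝ᵥ v ≤ l2Norm u * l2Norm v :=
  Real.sum_mul_le_sqrt_mul_sqrt _ _ _

lemma l2Norm_orthonormalBasis {ι : Type*} [Fintype ι]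
    (V : OrthonormalBasis ι ℝ (EuclideanSpace ℝ (Fin n))) (k : ι) : l2Norm (V k) = 1 := by
  rw [l2Norm_eq_norm_toLp]
  exact V.norm_eq_one k

end

lemma sum_mul_eq_sum_mulVec_dotProduct_mulVec {m n ι : Type*} [Fintype m] [Fintype n]
    [Fintype ι] (A E : Matrix m n ℝ) (V : OrthonormalBasis ι ℝ (EuclideanSpace ℝ n)) :
    ∑ i, ∑ j, A i j * E i j = ∑ k, (A *ᵥ V k) ⬝ᵥ (E *ᵥ V k) := by
  simp only [dotProduct]
  rw [Finset.sum_comm (f := fun k i => (A *ᵥ V k) i * (E *ᵥ V k) i)]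
  refine Finset.sum_congr rfl fun i _ => ?_
  have := V.sum_inner_mul_inner (WithLp.toLp 2 (A i)) (WithLp.toLp 2 (E i))
  simp only [EuclideanSpace.inner_eq_star_dotProduct] at this
  simpa [mulVec, dotProduct, mul_comm] using this.symm

lemma mulVec_eigenvectorBasis_dotProduct_self {m n : Type*} [Fintype m] [Fintype n]
    [DecidableEq n] {E : Matrix m n ℝ} (hE : (Eᵀ * E).IsHermitian) (k : n) :
    (E *ᵥ hE.eigenvectorBasis k) ⬝ᵥ (E *ᵥ hE.eigenvectorBasis k) = hE.eigenvalues k := by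
  have := hE.eigenvalues_eq k
  rw [← mulVec_mulVec, dotProduct_mulVec, vecMul_transpose, star_trivial] at this
  simpa [dotProduct_comm] using this.symm

section

variable {a b : ℕ}

lemma specNorm_nonneg (A : Matrix (Fin a) (Fin b) ℝ) : 0 ≤ specNorm A :=
  Real.sSup_nonneg (by rintro _ ⟨v, -, rfl⟩; exact Real.sqrt_nonneg _)

lemma l2Norm_mulVec_le_specNorm (A : Matrix (Fin a) (Fin b) ℝ) {v : Fin b → ℝ}
    (hv : l2Norm v ≤ 1) : l2Norm (A *ᵥ v) ≤ specNorm A := by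
  set f := LinearMap.toContinuousLinearMap (toEuclideanLin A)
  refine le_csSup ⟨‖f‖, ?_⟩ ⟨v, hv, rfl⟩
  rintro _ ⟨w, hw, rfl⟩
  exact (l2Norm_eq_norm_toLp _).trans_le
    (f.unit_le_opNorm _ ((l2Norm_eq_norm_toLp w).symm.trans_le hw))

lemma nuclearNorm_nonneg (E : Matrix (Fin a) (Fin b) ℝ) : 0 ≤ nuclearNorm E :=
  Finset.sum_nonneg fun _ _ => Real.sqrt_nonneg _

lemma l2Norm_mulVec_eigenvectorBasis {E : Matrix (Fin a) (Fin b) ℝ}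
    (hE : (Eᵀ * E).IsHermitian) (k : Fin b) :
    l2Norm (E *ᵥ hE.eigenvectorBasis k) = Real.sqrt (hE.eigenvalues k) := by
  rw [l2Norm_eq_sqrt_dotProduct, mulVec_eigenvectorBasis_dotProduct_self]

theorem sum_mul_le_specNorm_mul_nuclearNorm (A E : Matrix (Fin a) (Fin b) ℝ) :
    ∑ i, ∑ j, A i j * E i j ≤ specNorm A * nuclearNorm E := by
  set hE : (Eᵀ * E).IsHermitian := isHermitian_conjTranspose_mul_self E
  set V := hE.eigenvectorBasis
  rw [sum_mul_eq_sum_mulVec_dotProduct_mulVec A E V, nuclearNorm, Finset.mul_sum]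
  refine Finset.sum_le_sum fun k _ => ?_
  calc (A *ᵥ V k) ⬝ᵥ (E *ᵥ V k)
      ≤ l2Norm (A *ᵥ V k) * l2Norm (E *ᵥ V k) := dotProduct_le_l2Norm_mul_l2Norm _ _
    _ ≤ specNorm A * Real.sqrt (hE.eigenvalues k) := by
      rw [l2Norm_mulVec_eigenvectorBasis]
      gcongr
      exact l2Norm_mulVec_le_specNorm A (l2Norm_orthonormalBasis V k).le

end

theorem measurement_error_upper_bound_general
    (m p₂ n r : ℕ)
    (W : Matrix (Fin m) (Fin p₂) ℝ →ₗ[ℝ] (Fin n → ℝ))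
    (σ c c₁ : ℝ)
    (z : Fin n → ℝ) (E : Matrix (Fin m) (Fin p₂) ℝ)
    (Wadj : (Fin n → ℝ) → Matrix (Fin m) (Fin p₂) ℝ)
    -- `Wadj` is the adjoint of `W` w.r.t. the trace inner product
    (hadj : ∀ (v : Fin n → ℝ) (B : Matrix (Fin m) (Fin p₂) ℝ),
      ∑ i, ∑ j, Wadj v i j * B i j = ∑ i, v i * W B i)
    (h1 : l2Norm (W E - z) ^ 2 ≤ σ ^ 2 * (n + c₁ * r * max m p₂))
    (h2 : σ ^ 2 * (n - c₁ * r * max m p₂) ≤ l2Norm z ^ 2)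
    (h3 : specNorm (Wadj z) ≤ c * σ * Real.sqrt (max m p₂))
    (h4 : nuclearNorm E ≤ 2 * Real.sqrt (2 * r) * frobNorm E) :
    l2Norm (W E) ^ 2 ≤
      4 * c * σ * Real.sqrt (2 * r) * frobNorm E * Real.sqrt (max m p₂)
        + 2 * c₁ * σ ^ 2 * r * max m p₂ := by
  have hexpand : l2Norm (W E) ^ 2
      = l2Norm (W E - z) ^ 2 + 2 * ∑ i, z i * W E i - l2Norm z ^ 2 := by
    simp only [l2Norm_sq, Pi.sub_apply, Finset.mul_sum, ← Finset.sum_add_distrib,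
      ← Finset.sum_sub_distrib]
    exact Finset.sum_congr rfl fun i _ => by ring
  have hdual : ∑ i, z i * W E i
      ≤ c * σ * Real.sqrt (max m p₂) * (2 * Real.sqrt (2 * r) * frobNorm E) := by
    rw [← hadj]
    exact (sum_mul_le_specNorm_mul_nuclearNorm _ E).trans
      (mul_le_mul h3 h4 (nuclearNorm_nonneg E) ((specNorm_nonneg _).trans h3))
  linarith

/-- upper bound on `‖W(E)‖₂²` from feasibility and the cone condition. -/
theorem measurement_error_upper_bound
    (m p₂ n r : ℕ) (hr : 1 ≤ r)
    (W : Matrix (Fin m) (Fin p₂) ℝ →ₗ[ℝ] (Fin n → ℝ))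
    (σ c c₁ : ℝ) (hσ : 0 < σ) (hc : 0 < c) (hc₁ : 0 < c₁)
    (z : Fin n → ℝ) (E : Matrix (Fin m) (Fin p₂) ℝ)
    (Wadj : (Fin n → ℝ) → Matrix (Fin m) (Fin p₂) ℝ)
    -- `Wadj` is the adjoint of `W` w.r.t. the trace inner product
    (hadj : ∀ (v : Fin n → ℝ) (B : Matrix (Fin m) (Fin p₂) ℝ),
      ∑ i, ∑ j, Wadj v i j * B i j = ∑ i, v i * W B i)
    (h1 : l2Norm (W E - z) ^ 2 ≤ σ ^ 2 * (n + c₁ * r * max m p₂))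
    (h2 : σ ^ 2 * (n - c₁ * r * max m p₂) ≤ l2Norm z ^ 2)
    (h3 : specNorm (Wadj z) ≤ c * σ * Real.sqrt (max m p₂))
    (h4 : nuclearNorm E ≤ 2 * Real.sqrt (2 * r) * frobNorm E) :
    l2Norm (W E) ^ 2 ≤
      4 * c * σ * Real.sqrt (2 * r) * frobNorm E * Real.sqrt (max m p₂)
        + 2 * c₁ * σ ^ 2 * r * max m p₂ :=
  measurement_error_upper_bound_general m p₂ n r W σ c c₁ z E Wadj hadj h1 h2 h3 h4
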